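/- Let d > 0 and let a, b be naturals with 0 ≤ b < a, a ≥ 2. The recursively defined terminal function ω on words over {0,…,d−1} — ω(ε) = ε, ω(0u) = ω(u), and for 0 < i < d, ω(iu) = c·ω(v) where the run of the division-by-d^{|u|+1} transducer in base ad from state encoded by the word iu on the single input digit b·d outputs digit c and reaches the state encoded by 0v — satisfies, for every n and every word w of length n with encoding q = [w] (reverse base-d), [ω(w)]_{ad} = f_{a,b,d}^n(q) and |ω(w)| = μ_{a,b,d,n}(q). -/

import Mathlib

/-!
Write `f = fabd a b d`. For `n` steps the orbit of `c * d ^ n + r` runs in lockstep with that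
of `r`: divisibility by `d` only sees `r`, a division step lowers the exponent of `d` in the
high part, and a step `m ↦ a * m + b` turns `c * d ^ (k + 1)` into `(a * d) * c * d ^ k`.
Hence `f^[n] (c * d ^ n + r) = c * (a * d) ^ μ_n(r) + f^[n] r`. When `d ∤ q`, `ω` emits the
digit `c = f q / d ^ n` and continues from `r = f q % d ^ n`, so induction on `n` gives both
the value and the length of `ω`.
-/

/-- `f a b d m = m / d` if `d ∣ m`, else `a * m + b`. -/
def fabd (a b d : ℕ) : ℕ → ℕ := fun m => if d ∣ m then m / d else a * m + b

/-- `μ a b d n q` counts indices `k < n` with `d ∤ f^[k] q`. -/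
def muabd (a b d n q : ℕ) : ℕ :=
  ((Finset.range n).filter (fun k => ¬ d ∣ (fabd a b d)^[k] q)).card

/-- The recursively defined terminal function `ω`, on a word of length `n`
over `{0,…,d-1}` encoded (reverse base-`d`) by the state `q` of the
division-by-`d^n` transducer in base `a*d`:
`ω(ε) = ε`, `ω(0u) = ω(u)`, and for a word starting with a nonzero digit,
`ω(iu) = c · ω(v)` where from state `q` on the single input digit `b*d`
the division-by-`d^n` transducer in base `a*d` outputs `c` and reaches the
state `d·[v]` encoded by the word `0v`. -/
def omegaW (a b d : ℕ) : ℕ → ℕ → List ℕ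
  | 0, _ => []
  | n + 1, q =>
      if d ∣ q then omegaW a b d n (q / d)
      else (q * (a * d) + b * d) / d ^ (n + 1) ::
        omegaW a b d n (((q * (a * d) + b * d) % d ^ (n + 1)) / d)

/-- Base-`a` value, most significant digit first. -/
def msbVal (a : ℕ) : List ℕ → ℕ
  | [] => 0
  | c :: w => c * a ^ w.length + msbVal a w

section Collatz

variable {a b d : ℕ}

theorem fabd_of_dvd {m : ℕ} (h : d ∣ m) : fabd a b d m = m / d := if_pos h

theorem fabd_of_not_dvd {m : ℕ} (h : ¬ d ∣ m) : fabd a b d m = a * m + b := if_neg h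

theorem muabd_succ (n q : ℕ) :
    muabd a b d (n + 1) q = muabd a b d n (fabd a b d q) + if d ∣ q then 0 else 1 := by
  simp only [muabd, Finset.card_filter, Finset.sum_range_succ', Function.iterate_succ_apply,
    Function.iterate_zero_apply, ite_not]
  rfl

theorem dvd_mul_pow_succ_add_iff (c r n : ℕ) : d ∣ c * d ^ (n + 1) + r ↔ d ∣ r :=
  Nat.dvd_add_right (Dvd.dvd.mul_left (dvd_pow_self d n.succ_ne_zero) c)

theorem fabd_mul_pow_succ_add (hd : 0 < d) (c r n : ℕ) :
    fabd a b d (c * d ^ (n + 1) + r) =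
      c * (a * d) ^ (if d ∣ r then 0 else 1) * d ^ n + fabd a b d r := by
  by_cases h : d ∣ r
  · obtain ⟨s, rfl⟩ := h
    have hsplit : c * d ^ (n + 1) + d * s = d * (c * d ^ n + s) := by ring
    rw [fabd_of_dvd ((dvd_mul_pow_succ_add_iff c _ n).2 (dvd_mul_right d s)),
      fabd_of_dvd (dvd_mul_right d s), if_pos (dvd_mul_right d s), hsplit,
      Nat.mul_div_cancel_left _ hd, Nat.mul_div_cancel_left _ hd]
    ring
  · rw [fabd_of_not_dvd (mt (dvd_mul_pow_succ_add_iff c r n).1 h), fabd_of_not_dvd h, if_neg h]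
    ring

theorem muabd_mul_pow_add (hd : 0 < d) (n c r : ℕ) :
    muabd a b d n (c * d ^ n + r) = muabd a b d n r := by
  induction n generalizing c r with
  | zero => rfl
  | succ n ih =>
    simp only [muabd_succ, fabd_mul_pow_succ_add hd, ih, dvd_mul_pow_succ_add_iff]

theorem iterate_fabd_mul_pow_add (hd : 0 < d) (n c r : ℕ) :
    (fabd a b d)^[n] (c * d ^ n + r) = c * (a * d) ^ muabd a b d n r + (fabd a b d)^[n] r := by
  induction n generalizing c r with
  | zero => simp [muabd]
  | succ n ih =>
    rw [Function.iterate_succ_apply, Function.iterate_succ_apply, fabd_mul_pow_succ_add hd, ih,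
      muabd_succ, pow_add, mul_assoc c, mul_comm ((a * d) ^ _)]

theorem omegaW_succ_of_dvd {n q : ℕ} (h : d ∣ q) :
    omegaW a b d (n + 1) q = omegaW a b d n (fabd a b d q) := by
  rw [omegaW, if_pos h, fabd_of_dvd h]

theorem omegaW_succ_of_not_dvd (hd : 0 < d) {n q : ℕ} (h : ¬ d ∣ q) :
    omegaW a b d (n + 1) q =
      fabd a b d q / d ^ n :: omegaW a b d n (fabd a b d q % d ^ n) := by
  have hscale : q * (a * d) + b * d = d * fabd a b d q := by rw [fabd_of_not_dvd h]; ring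
  rw [omegaW, if_neg h, hscale, pow_succ', Nat.mul_div_mul_left _ _ hd, Nat.mul_mod_mul_left,
    Nat.mul_div_cancel_left _ hd]

theorem length_omegaW (hd : 0 < d) {n q : ℕ} (hq : q < d ^ n) :
    (omegaW a b d n q).length = muabd a b d n q := by
  induction n generalizing q with
  | zero => rfl
  | succ n ih =>
    by_cases h : d ∣ q
    · rw [omegaW_succ_of_dvd h, muabd_succ, if_pos h, add_zero, fabd_of_dvd h,
        ih (Nat.div_lt_of_lt_mul (pow_succ' d n ▸ hq))]
    · rw [omegaW_succ_of_not_dvd hd h, muabd_succ, if_neg h, List.length_cons,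
        ih (Nat.mod_lt _ (pow_pos hd n))]
      conv_rhs => rw [← Nat.div_add_mod' (fabd a b d q) (d ^ n), muabd_mul_pow_add hd]

theorem msbVal_omegaW (hd : 0 < d) {n q : ℕ} (hq : q < d ^ n) :
    msbVal (a * d) (omegaW a b d n q) = (fabd a b d)^[n] q := by
  induction n generalizing q with
  | zero => simp [omegaW, msbVal, Nat.lt_one_iff.1 (pow_zero d ▸ hq)]
  | succ n ih =>
    rw [Function.iterate_succ_apply]
    by_cases h : d ∣ q
    · rw [omegaW_succ_of_dvd h, fabd_of_dvd h, ih (Nat.div_lt_of_lt_mul (pow_succ' d n ▸ hq))]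
    · have hr : fabd a b d q % d ^ n < d ^ n := Nat.mod_lt _ (pow_pos hd n)
      rw [omegaW_succ_of_not_dvd hd h, msbVal, ih hr, length_omegaW hd hr]
      conv_rhs => rw [← Nat.div_add_mod' (fabd a b d q) (d ^ n), iterate_fabd_mul_pow_add hd]

end Collatz

theorem omegaW_spec_general (a b d : ℕ) (hd : 0 < d)
    (n q : ℕ) (hq : q < d ^ n) :
    msbVal (a * d) (omegaW a b d n q) = (fabd a b d)^[n] q ∧
    (omegaW a b d n q).length = muabd a b d n q :=
  ⟨msbVal_omegaW hd hq, length_omegaW hd hq⟩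

theorem omegaW_spec (a b d : ℕ) (hb : b < a) (ha : a ≠ 1) (hd : 0 < d)
    (n q : ℕ) (hq : q < d ^ n) :
    msbVal (a * d) (omegaW a b d n q) = (fabd a b d)^[n] q ∧
    (omegaW a b d n q).length = muabd a b d n q :=
  omegaW_spec_general a b d hd n q hq
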